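/- arXiv:0909.1557 — 3 statements merged into one kernel-verified Lean document; each statement's English description precedes it below -/
import Mathlib

section
/- Let d ≥ 1, let p : Fin d → ℝ be a probability vector with Shannon entropy E := −∑ᵢ p i · log₂(p i) and surprisal variance σ² := ∑ᵢ p i · (log₂(p i))² − E². Then for every ε with 0 < ε < 1 and every n ≥ 1 there exists a nonempty finite set S of strings x : Fin n → Fin d with ∑_{x ∈ S} ∏ᵢ p(x i) ≥ 1 − ε and log₂(|S|) + log₂( max_{x ∈ S} ∏ᵢ p(x i) ) ≤ 2·σ·√(n/ε). In other words, the ε-perturbed entanglement spread of the n-fold tensor power of a pure state with Schmidt-coefficient distribution p is at most 2σ√(n/ε) = O(√n). -/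
/-!
Under the product distribution, the log-likelihood `log₂ ∏ᵢ p (x i)` of a string is a sum of
`n` independent copies of `log₂ p`, so it has mean `-nE` and variance `nσ²`. By Chebyshev's
inequality all but mass `ε` of the strings lie in the window `|log₂ ∏ᵢ p (x i) + nE| ≤ t` with
`t = σ√(n/ε)`. Every probability in that window is at least `2^(-nE-t)`, so the window holds at
most `2^(nE+t)` strings, while its largest probability is at most `2^(-nE+t)`; the two
logarithms add up to at most `2t`.
-/

open Finset Real

section ProductWeights

variable {ι α : Type*} [Fintype ι] [Fintype α] [DecidableEq ι] {p : α → ℝ}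

theorem sum_prod_mul_prod_apply (g : ι → α → ℝ) :
    ∑ x : ι → α, (∏ i, p (x i)) * ∏ i, g i (x i) = ∏ i, ∑ a, p a * g i a := by
  simp_rw [← prod_mul_distrib]
  exact (Fintype.prod_sum fun i a => p a * g i a).symm

theorem sum_prod_apply (hp1 : ∑ a, p a = 1) : ∑ x : ι → α, ∏ i, p (x i) = 1 := by
  rw [← Fintype.prod_sum fun _ a => p a, hp1, prod_const_one]

theorem sum_prod_mul_apply (hp1 : ∑ a, p a = 1) (h : α → ℝ) (i : ι) :
    ∑ x : ι → α, (∏ l, p (x l)) * h (x i) = ∑ a, p a * h a := by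
  have key := sum_prod_mul_prod_apply (p := p) fun l a => if l = i then h a else 1
  have marginal (l : ι) :
      ∑ a, p a * (if l = i then h a else 1) = if l = i then ∑ a, p a * h a else 1 := by
    split_ifs <;> simp [hp1]
  simpa only [prod_ite_eq', mem_univ, if_true, marginal] using key

theorem sum_prod_mul_apply_mul_apply (hp1 : ∑ a, p a = 1) (h k : α → ℝ) {i j : ι}
    (hij : i ≠ j) :
    ∑ x : ι → α, (∏ l, p (x l)) * (h (x i) * k (x j)) =
      (∑ a, p a * h a) * ∑ a, p a * k a := by
  have key := sum_prod_mul_prod_apply (p := p)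
    fun l a => (if l = i then h a else 1) * (if l = j then k a else 1)
  have marginal (l : ι) :
      ∑ a, p a * ((if l = i then h a else 1) * (if l = j then k a else 1)) =
        (if l = i then ∑ a, p a * h a else 1) * (if l = j then ∑ a, p a * k a else 1) := by
    by_cases hi : l = i
    · subst hi
      simp only [hij, if_true, if_false, mul_one]
    · split_ifs <;> simp [hp1]
  simpa only [prod_mul_distrib, prod_ite_eq', mem_univ, if_true, marginal] using key

theorem sum_prod_mul_sum_apply_sq (hp1 : ∑ a, p a = 1) (f : α → ℝ)
    (hf : ∑ a, p a * f a = 0) :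
    ∑ x : ι → α, (∏ l, p (x l)) * (∑ i, f (x i)) ^ 2 =
      Fintype.card ι * ∑ a, p a * f a ^ 2 := by
  have pair (i j : ι) :
      ∑ x : ι → α, (∏ l, p (x l)) * (f (x i) * f (x j)) =
        if i = j then ∑ a, p a * f a ^ 2 else 0 := by
    split_ifs with hij
    · subst hij
      simpa [sq] using sum_prod_mul_apply hp1 (fun a => f a * f a) i
    · rw [sum_prod_mul_apply_mul_apply hp1 f f hij, hf, zero_mul]
  calc ∑ x : ι → α, (∏ l, p (x l)) * (∑ i, f (x i)) ^ 2
      = ∑ i, ∑ j, ∑ x : ι → α, (∏ l, p (x l)) * (f (x i) * f (x j)) := by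
        simp_rw [sq, sum_mul_sum, mul_sum]
        rw [sum_comm]
        exact sum_congr rfl fun _ _ => sum_comm
    _ = Fintype.card ι * ∑ a, p a * f a ^ 2 := by
        simp [pair, sum_ite_eq]

end ProductWeights

section WeightedMean

variable {α : Type*} [Fintype α] {p : α → ℝ}

theorem sum_mul_sub_sum_mul (hp1 : ∑ a, p a = 1) (h : α → ℝ) :
    ∑ a, p a * (h a - ∑ b, p b * h b) = 0 := by
  simp only [mul_sub, sum_sub_distrib, ← sum_mul, hp1, one_mul, sub_self]

theorem sum_mul_sub_sum_mul_sq (hp1 : ∑ a, p a = 1) (h : α → ℝ) :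
    ∑ a, p a * (h a - ∑ b, p b * h b) ^ 2 = ∑ a, p a * h a ^ 2 - (∑ a, p a * h a) ^ 2 := by
  set m := ∑ b, p b * h b
  have expand (a : α) :
      p a * (h a - m) ^ 2 = p a * h a ^ 2 - 2 * m * (p a * h a) + m ^ 2 * p a := by ring
  simp only [expand, sum_add_distrib, sum_sub_distrib, ← mul_sum, hp1]
  ring

end WeightedMean

theorem sum_prod_mul_logb_prod_sub_sq {ι α : Type*} [Fintype ι] [Fintype α] [DecidableEq ι]
    {p : α → ℝ} (hp1 : ∑ a, p a = 1) (b : ℝ) :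
    ∑ x : ι → α, (∏ i, p (x i)) *
        (logb b (∏ i, p (x i)) - Fintype.card ι * ∑ a, p a * logb b (p a)) ^ 2 =
      Fintype.card ι * (∑ a, p a * logb b (p a) ^ 2 - (∑ a, p a * logb b (p a)) ^ 2) := by
  set m := ∑ a, p a * logb b (p a)
  have centered (x : ι → α) :
      (∏ i, p (x i)) * (logb b (∏ i, p (x i)) - Fintype.card ι * m) ^ 2 =
        (∏ i, p (x i)) * (∑ i, (logb b (p (x i)) - m)) ^ 2 := by
    by_cases hx : ∏ i, p (x i) = 0
    · simp only [hx, zero_mul]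
    · rw [logb_prod _ _ fun i _ => prod_ne_zero_iff.mp hx i (mem_univ i), sum_sub_distrib,
        sum_const, card_univ, nsmul_eq_mul]
  simp only [centered]
  rw [sum_prod_mul_sum_apply_sq hp1 (fun a => logb b (p a) - m) (sum_mul_sub_sum_mul hp1 _)]
  exact congrArg _ (sum_mul_sub_sum_mul_sq hp1 _)

theorem sum_filter_lt_abs_le {β : Type*} [Fintype β] {w g : β → ℝ} (hw : ∀ x, 0 ≤ w x)
    {t ε : ℝ} (ht : 0 ≤ t) (hε : 0 ≤ ε) (h : ∑ x, w x * g x ^ 2 ≤ ε * t ^ 2) :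
    ∑ x with t < |g x|, w x ≤ ε := by
  have hterm (x : β) : 0 ≤ w x * g x ^ 2 := mul_nonneg (hw x) (sq_nonneg _)
  rcases ht.eq_or_lt with rfl | ht
  · have hzero := (sum_eq_zero_iff_of_nonneg fun x _ => hterm x).mp
      (le_antisymm (by simpa using h) (sum_nonneg fun x _ => hterm x))
    rw [sum_eq_zero fun x hx => ?_]
    · exact hε
    have hgx : g x ≠ 0 := abs_pos.mp (mem_filter.mp hx).2
    simpa [hgx] using hzero x (mem_univ x)
  · refine le_of_mul_le_mul_right ?_ (pow_pos ht 2)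
    calc (∑ x with t < |g x|, w x) * t ^ 2
        ≤ ∑ x with t < |g x|, w x * g x ^ 2 := by
          rw [sum_mul]
          refine sum_le_sum fun x hx => mul_le_mul_of_nonneg_left ?_ (hw x)
          simpa only [sq_abs] using pow_le_pow_left₀ ht.le (mem_filter.mp hx).2.le 2
      _ ≤ ∑ x, w x * g x ^ 2 := sum_le_sum_of_subset_of_nonneg (subset_univ _)
          fun x _ _ => hterm x
      _ ≤ ε * t ^ 2 := h

theorem logb_card_add_logb_sup'_le {β : Type*} {b : ℝ} (hb : 1 < b) {S : Finset β}
    (hS : S.Nonempty) {w : β → ℝ} (hw : ∑ x ∈ S, w x ≤ 1) (hpos : ∀ x ∈ S, 0 < w x)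
    {c t : ℝ} (hdev : ∀ x ∈ S, |logb b (w x) - c| ≤ t) :
    logb b #S + logb b (S.sup' hS w) ≤ 2 * t := by
  obtain ⟨x₀, hx₀, hmax⟩ := exists_mem_eq_sup' hS w
  have hlog_max : logb b (S.sup' hS w) ≤ c + t := by
    rw [hmax]; linarith [(abs_le.mp (hdev x₀ hx₀)).2]
  have hmin (x : β) (hx : x ∈ S) : b ^ (c - t) ≤ w x :=
    (le_logb_iff_rpow_le hb (hpos x hx)).mp (by linarith [(abs_le.mp (hdev x hx)).1])
  have hcard : (#S : ℝ) * b ^ (c - t) ≤ 1 :=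
    calc (#S : ℝ) * b ^ (c - t) = ∑ _x ∈ S, b ^ (c - t) := by rw [sum_const, nsmul_eq_mul]
      _ ≤ ∑ x ∈ S, w x := sum_le_sum hmin
      _ ≤ 1 := hw
  have hb0 : 0 < b := by linarith
  have hlog_card : logb b #S + (c - t) ≤ 0 :=
    calc logb b #S + (c - t) = logb b (#S * b ^ (c - t)) := by
          rw [logb_mul (Nat.cast_ne_zero.mpr hS.card_pos.ne') (rpow_pos_of_pos hb0 _).ne',
            logb_rpow hb0 hb.ne']
      _ ≤ 0 := logb_nonpos hb (by positivity) hcard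
  linarith

theorem exists_one_sub_le_sum_and_logb_card_add_logb_sup'_le {β : Type*} [Fintype β]
    {b : ℝ} (hb : 1 < b) {w : β → ℝ} (hw0 : ∀ x, 0 ≤ w x) (hw1 : ∑ x, w x = 1)
    {c t ε : ℝ} (hε1 : ε < 1) (hdev : ∑ x with t < |logb b (w x) - c|, w x ≤ ε) :
    ∃ (S : Finset β) (hS : S.Nonempty),
      1 - ε ≤ ∑ x ∈ S, w x ∧ logb b #S + logb b (S.sup' hS w) ≤ 2 * t := by
  -- Strings of weight zero have to be discarded, since `logb b 0 = 0` may put them in the window.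
  set S := (univ.filter fun x => |logb b (w x) - c| ≤ t).filter (w · ≠ 0) with hS_def
  have hmass : 1 - ε ≤ ∑ x ∈ S, w x := by
    have hsplit := sum_filter_add_sum_filter_not univ (fun x => |logb b (w x) - c| ≤ t) w
    simp only [not_le] at hsplit
    rw [hS_def, sum_filter_ne_zero]
    linarith
  have hS : S.Nonempty := nonempty_of_sum_ne_zero (f := w) (by linarith)
  refine ⟨S, hS, hmass,
    logb_card_add_logb_sup'_le hb hS ?_ (fun x hx => ?_) (c := c) fun x hx => ?_⟩
  · rw [← hw1]
    exact sum_le_sum_of_subset_of_nonneg (subset_univ _) fun x _ _ => hw0 x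
  · exact (hw0 x).lt_of_ne' (mem_filter.mp hx).2
  · exact (mem_filter.mp (mem_filter.mp hx).1).2

theorem perturbed_spread_sqrt_general (d : ℕ) (p : Fin d → ℝ)
    (hp0 : ∀ i, 0 ≤ p i) (hp1 : ∑ i, p i = 1)
    (E σ : ℝ) (hE : E = -∑ i, p i * Real.logb 2 (p i))
    (hσ : σ = Real.sqrt ((∑ i, p i * (Real.logb 2 (p i)) ^ 2) - E ^ 2))
    (ε : ℝ) (hε0 : 0 < ε) (hε1 : ε < 1) (n : ℕ) :
    ∃ (S : Finset (Fin n → Fin d)) (hS : S.Nonempty),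
      1 - ε ≤ ∑ x ∈ S, ∏ i, p (x i) ∧
      Real.logb 2 (S.card : ℝ) + Real.logb 2 (S.sup' hS fun x => ∏ i, p (x i)) ≤
        2 * σ * Real.sqrt (n / ε) := by
  have hP0 (x : Fin n → Fin d) : 0 ≤ ∏ i, p (x i) := prod_nonneg fun i _ => hp0 (x i)
  have hvar_nonneg : 0 ≤ ∑ i, p i * logb 2 (p i) ^ 2 - E ^ 2 := by
    rw [hE, neg_sq, ← sum_mul_sub_sum_mul_sq hp1]
    exact sum_nonneg fun a _ => mul_nonneg (hp0 a) (sq_nonneg _)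
  set t := σ * √(n / ε) with ht
  have hmoment : ∑ x : Fin n → Fin d, (∏ i, p (x i)) *
      (logb 2 (∏ i, p (x i)) - n * ∑ a, p a * logb 2 (p a)) ^ 2 = ε * t ^ 2 := by
    have h := sum_prod_mul_logb_prod_sub_sq (ι := Fin n) hp1 2
    rw [Fintype.card_fin] at h
    rw [h, ht, mul_pow, hσ, sq_sqrt hvar_nonneg, sq_sqrt (by positivity), hE, neg_sq]
    field_simp
  have ht0 : 0 ≤ t := mul_nonneg (hσ ▸ sqrt_nonneg _) (sqrt_nonneg _)
  obtain ⟨S, hS, hmass, hspread⟩ := exists_one_sub_le_sum_and_logb_card_add_logb_sup'_le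
    one_lt_two hP0 (sum_prod_apply hp1) hε1 (sum_filter_lt_abs_le hP0 ht0 hε0.le hmoment.le)
  exact ⟨S, hS, hmass, by linarith⟩

/-- The ε-perturbed entanglement spread of `n` copies of a pure state with
Schmidt-coefficient distribution `p` is `O(√n)`: there is a nonempty set `S` of strings
of total probability at least `1 - ε` with
`log₂ |S| + log₂ (max_{x ∈ S} ∏ᵢ p (x i)) ≤ 2σ√(n/ε)`. -/
theorem perturbed_spread_sqrt (d : ℕ) (hd : 1 ≤ d) (p : Fin d → ℝ)
    (hp0 : ∀ i, 0 ≤ p i) (hp1 : ∑ i, p i = 1)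
    (E σ : ℝ) (hE : E = -∑ i, p i * Real.logb 2 (p i))
    (hσ : σ = Real.sqrt ((∑ i, p i * (Real.logb 2 (p i)) ^ 2) - E ^ 2))
    (ε : ℝ) (hε0 : 0 < ε) (hε1 : ε < 1) (n : ℕ) (hn : 1 ≤ n) :
    ∃ (S : Finset (Fin n → Fin d)) (hS : S.Nonempty),
      1 - ε ≤ ∑ x ∈ S, ∏ i, p (x i) ∧
      Real.logb 2 (S.card : ℝ) + Real.logb 2 (S.sup' hS fun x => ∏ i, p (x i)) ≤
        2 * σ * Real.sqrt (n / ε) :=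
  perturbed_spread_sqrt_general d p hp0 hp1 E σ hE hσ ε hε0 hε1 n
end

section
/- For natural numbers N ≥ 1 and r ≥ 1, with H_k := ∑_{i=1}^{k} 1/i denoting the k-th harmonic number, the following fidelity bound for embezzlement holds: ∑_{j=1}^{N·r} √( (1/(j · H_{Nr})) · (1/(r · ⌈j/r⌉ · H_N)) ) ≥ √( H_N / H_{Nr} ). The left-hand side is the overlap between the Schmidt-coefficient vector of the embezzling state of Schmidt rank Nr and the decreasingly sorted Schmidt-coefficient vector of the embezzling state of Schmidt rank N tensored with a maximally entangled state of Schmidt rank r. -/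
/-!
Since `j ≤ r⌈j/r⌉`, each summand is at least `1 / (r⌈j/r⌉ √(H_N H_{Nr}))`. The weights
`1 / (r⌈j/r⌉)` are constant equal to `1 / (r (n + 1))` on each block `nr < j ≤ (n + 1)r`, so
they sum to `H_N`, and `H_N / √(H_N H_{Nr}) = √(H_N / H_{Nr})`.
-/

noncomputable def harm (k : ℕ) : ℝ := ∑ i ∈ Finset.range k, (1 : ℝ) / (i + 1)

open Finset

lemma harm_pos {k : ℕ} (hk : 0 < k) : 0 < harm k :=
  sum_pos (fun i _ ↦ by positivity) (nonempty_range_iff.mpr hk.ne')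

lemma harm_succ (n : ℕ) : harm (n + 1) = harm n + 1 / (n + 1) :=
  sum_range_succ _ n

lemma Int.ceil_natCast_div_eq_of_mem_Ioc {K : Type*} [Field K] [LinearOrder K]
    [IsStrictOrderedRing K] [FloorRing K] {n r j : ℕ} (hj : j ∈ Ioc (n * r) (n * r + r)) :
    ⌈(j : K) / r⌉ = n + 1 := by
  obtain ⟨hlo, hhi⟩ := mem_Ioc.mp hj
  have hr : (0 : K) < r := by exact_mod_cast (show 0 < r by omega)
  have hlo' : (n : K) * r < j := by exact_mod_cast hlo
  have hhi' : (j : K) ≤ n * r + r := by exact_mod_cast hhi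
  rw [Int.ceil_eq_iff]
  push_cast
  constructor
  · rw [add_sub_cancel_right, lt_div_iff₀ hr]; exact hlo'
  · rw [div_le_iff₀ hr]; linarith

lemma sum_Ioc_one_div_mul_ceil_div (N : ℕ) {r : ℕ} (hr : 0 < r) :
    ∑ j ∈ Ioc 0 (N * r), 1 / ((r : ℝ) * ⌈(j : ℝ) / r⌉) = harm N := by
  induction N with
  | zero => simp [harm]
  | succ n ih =>
    rw [add_one_mul, ← sum_Ioc_consecutive _ (Nat.zero_le (n * r)) (Nat.le_add_right _ r), ih,
      sum_congr rfl fun j hj ↦ by rw [Int.ceil_natCast_div_eq_of_mem_Ioc hj], sum_const,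
      Nat.card_Ioc, Nat.add_sub_cancel_left, nsmul_eq_mul, harm_succ]
    have hr' : (r : ℝ) ≠ 0 := by exact_mod_cast hr.ne'
    push_cast
    field_simp

lemma one_div_div_sqrt_le_sqrt {x y A B : ℝ} (hx : 0 < x) (hxy : x ≤ y) (hA : 0 < A)
    (hB : 0 < B) : 1 / y / √(A * B) ≤ √(1 / (x * A) * (1 / (y * B))) := by
  have hy : 0 < y := hx.trans_le hxy
  calc 1 / y / √(A * B) = √(1 / (y * A * (y * B))) := by
        rw [← Real.sqrt_sq (by positivity : 0 ≤ 1 / y), ← Real.sqrt_div' _ (by positivity)]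
        congr 1
        field_simp
    _ ≤ √(1 / (x * A) * (1 / (y * B))) := by
        rw [← one_div_mul_one_div_rev, mul_comm (1 / (y * B))]
        gcongr

/-- Fidelity bound for embezzlement: the overlap between the Schmidt-coefficient vector
of the rank-`Nr` embezzling state and the sorted Schmidt-coefficient vector of the
rank-`N` embezzling state tensored with a rank-`r` maximally entangled state satisfies
`∑_{j=1}^{Nr} √((1/(j·H_{Nr}))·(1/(r·⌈j/r⌉·H_N))) ≥ √(H_N / H_{Nr})`. -/
theorem embezzlement_fidelity (N r : ℕ) (hN : 1 ≤ N) (hr : 1 ≤ r) :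
    Real.sqrt (harm N / harm (N * r)) ≤
      ∑ j ∈ Finset.Icc 1 (N * r),
        Real.sqrt ((1 / ((j : ℝ) * harm (N * r))) *
          (1 / ((r : ℝ) * ((⌈(j : ℝ) / (r : ℝ)⌉ : ℤ) : ℝ) * harm N))) := by
  have hHN : 0 < harm N := harm_pos hN
  have hHNr : 0 < harm (N * r) := harm_pos (Nat.mul_pos hN hr)
  have hr' : (0 : ℝ) < r := by exact_mod_cast hr
  calc √(harm N / harm (N * r)) = harm N / √(harm (N * r) * harm N) := by
        rw [Real.sqrt_mul hHNr.le, Real.sqrt_div' _ hHNr.le, mul_comm √(harm (N * r)), ← div_div,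
          Real.div_sqrt]
    _ = ∑ j ∈ Icc 1 (N * r), 1 / ((r : ℝ) * ⌈(j : ℝ) / r⌉) / √(harm (N * r) * harm N) := by
        rw [← sum_div, show Icc 1 (N * r) = Ioc 0 (N * r) from Icc_add_one_left_eq_Ioc 0 _,
          sum_Ioc_one_div_mul_ceil_div N hr]
    _ ≤ _ := sum_le_sum fun j hj ↦ by
        have hj : (1 : ℝ) ≤ j := by exact_mod_cast (mem_Icc.mp hj).1
        refine one_div_div_sqrt_le_sqrt (by linarith) ?_ hHNr hHN
        rw [← div_le_iff₀' hr']
        exact Int.le_ceil _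
end

section
/- Let M₀, M₁ : Matrix (Fin a) (Fin b) ℂ. Then, with respect to the ℓ²-operator norm (largest singular value), the horizontal concatenation satisfies ‖fromColumns M₀ M₁‖ ≤ √2 · ‖fromRows M₀ M₁‖, where fromColumns M₀ M₁ is the a×2b matrix [M₀ M₁] and fromRows M₀ M₁ is the 2a×b matrix [M₀; M₁]. Physically, this says that transmitting a single qubit can increase the largest squared Schmidt coefficient of a bipartite pure state by at most a factor of 2. -/
/-!
`[M₀ M₁] [M₀ M₁]ᴴ = M₀ M₀ᴴ + M₁ M₁ᴴ`, so by the C⋆-identity and the triangle inequality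
`‖[M₀ M₁]‖² ≤ ‖M₀‖² + ‖M₁‖²`. Each block `Mᵢ` is obtained from `[M₀; M₁]` by multiplying with a
coordinate projection `[1 0]` or `[0 1]`, which has norm at most one, so `‖Mᵢ‖ ≤ ‖[M₀; M₁]‖`.
-/

open Matrix
open scoped Matrix.Norms.L2Operator

namespace Matrix

variable {𝕜 : Type*} [RCLike 𝕜]

lemma l2_opNorm_one_le {n : Type*} [Fintype n] [DecidableEq n] : ‖(1 : Matrix n n 𝕜)‖ ≤ 1 := by
  rw [cstar_norm_def, map_one]
  exact ContinuousLinearMap.norm_id_le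

lemma l2_opNorm_mul_conjTranspose_self {m n : Type*} [Fintype m] [Fintype n] [DecidableEq m]
    [DecidableEq n] (A : Matrix m n 𝕜) : ‖A * Aᴴ‖ = ‖A‖ * ‖A‖ := by
  simpa only [conjTranspose_conjTranspose, l2_opNorm_conjTranspose] using
    l2_opNorm_conjTranspose_mul_self Aᴴ

lemma l2_opNorm_le_one_of_mul_conjTranspose_eq_one {m n : Type*} [Fintype m] [Fintype n]
    [DecidableEq m] [DecidableEq n] {A : Matrix m n 𝕜} (hA : A * Aᴴ = 1) : ‖A‖ ≤ 1 := by
  have h : ‖A‖ * ‖A‖ ≤ 1 := by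
    rw [← l2_opNorm_mul_conjTranspose_self, hA]
    exact l2_opNorm_one_le
  nlinarith [norm_nonneg A]

lemma l2_opNorm_le_of_mul_eq {l m n : Type*} [Fintype l] [Fintype m] [Fintype n] [DecidableEq m]
    [DecidableEq n] {P : Matrix l m 𝕜} (hP : ‖P‖ ≤ 1) {A : Matrix m n 𝕜} {B : Matrix l n 𝕜}
    (hB : P * A = B) : ‖B‖ ≤ ‖A‖ := by
  rw [← hB]
  calc ‖P * A‖ ≤ ‖P‖ * ‖A‖ := l2_opNorm_mul P A
    _ ≤ ‖A‖ := mul_le_of_le_one_left (norm_nonneg A) hP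

lemma l2_opNorm_le_l2_opNorm_fromRows_left {m₁ m₂ n : Type*} [Fintype m₁] [Fintype m₂]
    [Fintype n] [DecidableEq m₁] [DecidableEq m₂] [DecidableEq n] (A₁ : Matrix m₁ n 𝕜)
    (A₂ : Matrix m₂ n 𝕜) : ‖A₁‖ ≤ ‖fromRows A₁ A₂‖ := by
  refine l2_opNorm_le_of_mul_eq (P := fromCols 1 0)
    (l2_opNorm_le_one_of_mul_conjTranspose_eq_one ?_) ?_
  all_goals simp [conjTranspose_fromCols_eq_fromRows_conjTranspose, fromCols_mul_fromRows]

lemma l2_opNorm_le_l2_opNorm_fromRows_right {m₁ m₂ n : Type*} [Fintype m₁] [Fintype m₂]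
    [Fintype n] [DecidableEq m₁] [DecidableEq m₂] [DecidableEq n] (A₁ : Matrix m₁ n 𝕜)
    (A₂ : Matrix m₂ n 𝕜) : ‖A₂‖ ≤ ‖fromRows A₁ A₂‖ := by
  refine l2_opNorm_le_of_mul_eq (P := fromCols 0 1)
    (l2_opNorm_le_one_of_mul_conjTranspose_eq_one ?_) ?_
  all_goals simp [conjTranspose_fromCols_eq_fromRows_conjTranspose, fromCols_mul_fromRows]

lemma fromCols_mul_conjTranspose_fromCols {m n₁ n₂ : Type*} [Fintype n₁] [Fintype n₂]
    (B₁ : Matrix m n₁ 𝕜) (B₂ : Matrix m n₂ 𝕜) :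
    fromCols B₁ B₂ * (fromCols B₁ B₂)ᴴ = B₁ * B₁ᴴ + B₂ * B₂ᴴ := by
  rw [conjTranspose_fromCols_eq_fromRows_conjTranspose, fromCols_mul_fromRows]

lemma l2_opNorm_fromCols_sq_le {m n₁ n₂ : Type*} [Fintype m] [Fintype n₁] [Fintype n₂]
    [DecidableEq m] [DecidableEq n₁] [DecidableEq n₂] (B₁ : Matrix m n₁ 𝕜) (B₂ : Matrix m n₂ 𝕜) :
    ‖fromCols B₁ B₂‖ ^ 2 ≤ ‖B₁‖ ^ 2 + ‖B₂‖ ^ 2 := by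
  simp only [sq, ← l2_opNorm_mul_conjTranspose_self, fromCols_mul_conjTranspose_fromCols]
  exact norm_add_le _ _

end Matrix

/-- Transmitting one qubit increases the largest squared Schmidt coefficient by at most
a factor of 2: in the ℓ²-operator norm (largest singular value), the horizontal
concatenation `[M₀ M₁]` satisfies `‖[M₀ M₁]‖ ≤ √2 · ‖[M₀; M₁]‖`. -/
theorem l2_opNorm_fromColumns_le (a b : ℕ) (M₀ M₁ : Matrix (Fin a) (Fin b) ℂ) :
    ‖fromCols M₀ M₁‖ ≤ Real.sqrt 2 * ‖fromRows M₀ M₁‖ := by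
  have h₀ := l2_opNorm_le_l2_opNorm_fromRows_left M₀ M₁
  have h₁ := l2_opNorm_le_l2_opNorm_fromRows_right M₀ M₁
  have hsq : ‖fromCols M₀ M₁‖ ^ 2 ≤ (Real.sqrt 2 * ‖fromRows M₀ M₁‖) ^ 2 := by
    rw [mul_pow, Real.sq_sqrt zero_le_two]
    calc ‖fromCols M₀ M₁‖ ^ 2 ≤ ‖M₀‖ ^ 2 + ‖M₁‖ ^ 2 := l2_opNorm_fromCols_sq_le M₀ M₁
      _ ≤ ‖fromRows M₀ M₁‖ ^ 2 + ‖fromRows M₀ M₁‖ ^ 2 := by gcongr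
      _ = 2 * ‖fromRows M₀ M₁‖ ^ 2 := by ring
  exact le_of_sq_le_sq hsq (by positivity)
end
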